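/- arXiv:2402.00383 — 4 statements merged into one kernel-verified Lean document; each statement's English description precedes it below -/
import Mathlib

section
/- Let A be a Schur ring over a group G, let f : F → F be any function with f(0)=0, and extend f coefficientwise to F[G] by f(Σ α_g g) = Σ f(α_g) g. Then f(α) ∈ A for every α ∈ A. -/
noncomputable def simpleQuantity (F : Type*) [Field F] {G : Type*} [Group G]
    (D : Finset G) : MonoidAlgebra F G :=
  ∑ g ∈ D, MonoidAlgebra.single g 1

structure SchurRing (F G : Type*) [Field F] [Group G] where
  parts : Set (Finset G)
  parts_nonempty : ∀ D ∈ parts, D.Nonempty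
  cover : ∀ g : G, ∃ D ∈ parts, g ∈ D
  eq_of_mem : ∀ D₁ ∈ parts, ∀ D₂ ∈ parts, ∀ g : G, g ∈ D₁ → g ∈ D₂ → D₁ = D₂
  one_mem : ({1} : Finset G) ∈ parts
  inv_mem : ∀ D ∈ parts, ∃ D' ∈ parts, ∀ g : G, g ∈ D' ↔ g⁻¹ ∈ D
  mul_mem : ∀ x ∈ Submodule.span F (simpleQuantity F '' parts),
    ∀ y ∈ Submodule.span F (simpleQuantity F '' parts),
    x * y ∈ Submodule.span F (simpleQuantity F '' parts)

noncomputable def SchurRing.span {F G : Type*} [Field F] [Group G] (A : SchurRing F G) :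
    Submodule F (MonoidAlgebra F G) :=
  Submodule.span F (simpleQuantity F '' A.parts)

def SchurRing.IsASet {F G : Type*} [Field F] [Group G] (A : SchurRing F G)
    (S : Set G) : Prop :=
  ∀ D ∈ A.parts, (∃ g ∈ D, g ∈ S) → ↑D ⊆ S

/-!
The span of a Schur ring is exactly the space of elements whose coefficients are constant on
each part: a nonzero such element loses at least one point of its support when the right
multiple of the simple quantity of a part is subtracted. Applying `f` coefficientwise keeps
coefficients constant on parts.
-/

section

open Finset

variable {F G : Type*} [Field F] [Group G]

theorem simpleQuantity_coeff [DecidableEq G] (D : Finset G) (g : G) :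
    (simpleQuantity F D).coeff g = if g ∈ D then 1 else 0 := by
  simp only [simpleQuantity, MonoidAlgebra.coeff_sum, MonoidAlgebra.coeff_single,
    Finsupp.finsetSum_apply, Finsupp.single_apply]
  exact sum_ite_eq' D g fun _ => 1

namespace SchurRing

variable (A : SchurRing F G)

def constOnParts : Submodule F (MonoidAlgebra F G) where
  carrier := {α | ∀ D ∈ A.parts, ∀ g ∈ D, ∀ h ∈ D, α.coeff g = α.coeff h}
  add_mem' {α β} hα hβ D hD g hg h hh := by
    simp only [MonoidAlgebra.coeff_add, Finsupp.add_apply, hα D hD g hg h hh, hβ D hD g hg h hh]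
  zero_mem' _ _ _ _ _ _ := rfl
  smul_mem' c α hα D hD g hg h hh := by
    simp only [MonoidAlgebra.coeff_smul, Finsupp.smul_apply, hα D hD g hg h hh]

variable {A}

theorem mem_of_mem_of_mem {D₁ D₂ : Finset G} (hD₁ : D₁ ∈ A.parts) (hD₂ : D₂ ∈ A.parts)
    {g h : G} (hg₁ : g ∈ D₁) (hg₂ : g ∈ D₂) (hh : h ∈ D₁) : h ∈ D₂ :=
  A.eq_of_mem D₁ hD₁ D₂ hD₂ g hg₁ hg₂ ▸ hh

theorem simpleQuantity_mem_constOnParts {D : Finset G} (hD : D ∈ A.parts) :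
    simpleQuantity F D ∈ A.constOnParts := by
  classical
  intro D' hD' g hg h hh
  simp only [simpleQuantity_coeff]
  exact if_congr ⟨fun hgD => mem_of_mem_of_mem hD' hD hg hgD hh,
    fun hhD => mem_of_mem_of_mem hD' hD hh hhD hg⟩ rfl rfl

theorem span_le_constOnParts : A.span ≤ A.constOnParts :=
  Submodule.span_le.mpr <| by
    rintro _ ⟨D, hD, rfl⟩
    exact simpleQuantity_mem_constOnParts hD

theorem coeff_sub_smul_simpleQuantity [DecidableEq G] {α : MonoidAlgebra F G}
    (hα : α ∈ A.constOnParts) {D : Finset G} (hD : D ∈ A.parts) {g : G} (hg : g ∈ D) (x : G) :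
    (α - α.coeff g • simpleQuantity F D).coeff x = if x ∈ D then 0 else α.coeff x := by
  simp only [MonoidAlgebra.coeff_sub, Finsupp.sub_apply, MonoidAlgebra.coeff_smul,
    Finsupp.smul_apply, simpleQuantity_coeff, smul_eq_mul, mul_ite, mul_one, mul_zero]
  split_ifs with hx
  · rw [hα D hD x hx g hg, sub_self]
  · rw [sub_zero]

theorem support_sub_smul_simpleQuantity_subset [DecidableEq G] {α : MonoidAlgebra F G}
    (hα : α ∈ A.constOnParts) {D : Finset G} (hD : D ∈ A.parts) {g : G} (hg : g ∈ D) :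
    (α - α.coeff g • simpleQuantity F D).coeff.support ⊆ α.coeff.support.erase g := by
  intro x hx
  rw [Finsupp.mem_support_iff, coeff_sub_smul_simpleQuantity hα hD hg] at hx
  split_ifs at hx with hxD
  · exact absurd rfl hx
  · exact mem_erase.mpr ⟨fun hxg => hxD (hxg ▸ hg), Finsupp.mem_support_iff.mpr hx⟩

theorem constOnParts_le_span : A.constOnParts ≤ A.span := by
  classical
  intro α hα
  induction hn : #α.coeff.support using Nat.strong_induction_on generalizing α with
  | _ n ih =>
    obtain hzero | ⟨g, hg⟩ := α.coeff.support.eq_empty_or_nonempty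
    · rw [MonoidAlgebra.coeff_eq_zero.mp (Finsupp.support_eq_empty.mp hzero)]
      exact zero_mem _
    obtain ⟨D, hD, hgD⟩ := A.cover g
    have hsub : α - α.coeff g • simpleQuantity F D ∈ A.span := by
      have hmem := sub_mem hα (Submodule.smul_mem _ (α.coeff g) (simpleQuantity_mem_constOnParts hD))
      refine ih _ ?_ hmem rfl
      calc #(α - α.coeff g • simpleQuantity F D).coeff.support
          ≤ #(α.coeff.support.erase g) :=
            card_le_card (support_sub_smul_simpleQuantity_subset hα hD hgD)
        _ < n := hn ▸ card_erase_lt_of_mem hg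
    simpa using
      add_mem hsub (Submodule.smul_mem _ (α.coeff g) (Submodule.subset_span ⟨D, hD, rfl⟩))

theorem span_eq_constOnParts : A.span = A.constOnParts :=
  le_antisymm span_le_constOnParts constOnParts_le_span

end SchurRing

end

theorem mapRange_mem_general {F G : Type*} [Field F] [Group G]
    (A : SchurRing F G) (f : F → F) (hf : f 0 = 0)
    (α : MonoidAlgebra F G) (hα : α ∈ A.span) :
    MonoidAlgebra.ofCoeff (Finsupp.mapRange f hf α.coeff) ∈ A.span := by
  rw [SchurRing.span_eq_constOnParts] at hα ⊢
  intro D hD g hg h hh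
  simp only [Finsupp.mapRange_apply, hα D hD g hg h hh]

/-- Coefficientwise application of any function `f : F → F` with `f 0 = 0`
preserves membership in a Schur ring. -/
theorem mapRange_mem {F G : Type*} [Field F] [CharZero F] [Group G]
    (A : SchurRing F G) (f : F → F) (hf : f 0 = 0)
    (α : MonoidAlgebra F G) (hα : α ∈ A.span) :
    MonoidAlgebra.ofCoeff (Finsupp.mapRange f hf α.coeff) ∈ A.span :=
  mapRange_mem_general A f hf α hα
end

section
/- Let φ : G → H be a group homomorphism with kernel K, and A a Schur ring over G such that K is an A-subgroup. Then the image φ(A) is a Schur ring over φ(G), whose basic sets are exactly the images φ(C) for C ∈ 𝒟(A). -/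
/-!
If `ker φ` is a union of basic sets, every basic set `C` meets the fibres of `φ` over the points of
another basic set `C'` in equally many elements: these counts are the coefficients on `C'` of the
product of the simple quantity of `C` with that of a union of basic sets lying in `ker φ`, and
elements of a Schur ring have constant coefficients on basic sets (characteristic `0` turns equal
coefficients into equal counts). Hence `φ` sends the simple quantity of `C` to a positive multiple
of the simple quantity of `φ(C)`, the images of two basic sets are equal or disjoint, and the span
of the images of the simple quantities is the image of the Schur ring, so it is closed under
multiplication.
-/

open scoped Finset

namespace SchurRing

variable {F G : Type*} [Field F] [Group G]

lemma coeff_simpleQuantity [DecidableEq G] (D : Finset G) (g : G) :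
    (simpleQuantity F D).coeff g = if g ∈ D then 1 else 0 := by
  simp [simpleQuantity, Finsupp.single_apply]

lemma coeff_mul_simpleQuantity (x : MonoidAlgebra F G) (C : Finset G) (g : G) :
    (x * simpleQuantity F C).coeff g = ∑ c ∈ C, x.coeff (g * c⁻¹) := by
  simp [simpleQuantity, Finset.mul_sum]

lemma simpleQuantity_mem_span (A : SchurRing F G) {D : Finset G} (hD : D ∈ A.parts) :
    simpleQuantity F D ∈ A.span :=
  Submodule.subset_span ⟨D, hD, rfl⟩

noncomputable def basicSetOf (A : SchurRing F G) (g : G) : Finset G :=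
  (A.cover g).choose

lemma basicSetOf_mem (A : SchurRing F G) (g : G) : A.basicSetOf g ∈ A.parts :=
  (A.cover g).choose_spec.1

lemma mem_basicSetOf (A : SchurRing F G) (g : G) : g ∈ A.basicSetOf g :=
  (A.cover g).choose_spec.2

lemma IsASet.basicSetOf_subset {A : SchurRing F G} {S : Set G} (hS : A.IsASet S) {g : G}
    (hg : g ∈ S) : ↑(A.basicSetOf g) ⊆ S := by
  unfold IsASet at hS
  exact hS _ (A.basicSetOf_mem g) ⟨g, A.mem_basicSetOf g, hg⟩

lemma mem_iff_mem_of_mem_parts (A : SchurRing F G) {D₁ D₂ : Finset G} (hD₁ : D₁ ∈ A.parts)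
    (hD₂ : D₂ ∈ A.parts) {g₁ g₂ : G} (h₁ : g₁ ∈ D₁) (h₂ : g₂ ∈ D₁) : g₁ ∈ D₂ ↔ g₂ ∈ D₂ := by
  constructor <;> intro h
  · exact A.eq_of_mem D₁ hD₁ D₂ hD₂ g₁ h₁ h ▸ h₂
  · exact A.eq_of_mem D₁ hD₁ D₂ hD₂ g₂ h₂ h ▸ h₁

lemma coeff_eq_of_mem_span (A : SchurRing F G) {x : MonoidAlgebra F G} (hx : x ∈ A.span)
    {D : Finset G} (hD : D ∈ A.parts) {g₁ g₂ : G} (h₁ : g₁ ∈ D) (h₂ : g₂ ∈ D) :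
    x.coeff g₁ = x.coeff g₂ := by
  classical
  induction hx using Submodule.span_induction with
  | mem z hz =>
    obtain ⟨E, hE, rfl⟩ := hz
    simp only [coeff_simpleQuantity, A.mem_iff_mem_of_mem_parts hD hE h₁ h₂]
  | zero => rfl
  | add x y _ _ hx hy => simp only [MonoidAlgebra.coeff_add, Finsupp.add_apply, hx, hy]
  | smul a x _ hx => simp only [MonoidAlgebra.coeff_smul, Finsupp.smul_apply, hx]

lemma pairwiseDisjoint_parts (A : SchurRing F G) : A.parts.PairwiseDisjoint id := by
  intro D₁ hD₁ D₂ hD₂ hne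
  exact Finset.disjoint_left.mpr fun g h₁ h₂ => hne (A.eq_of_mem D₁ hD₁ D₂ hD₂ g h₁ h₂)

lemma simpleQuantity_biUnion_basicSetOf_mem_span [DecidableEq G] (A : SchurRing F G)
    (T : Finset G) : simpleQuantity F (T.biUnion A.basicSetOf) ∈ A.span := by
  have hsub : ↑(T.image A.basicSetOf) ⊆ A.parts := by
    simpa [Set.subset_def] using fun g _ => A.basicSetOf_mem g
  have hunion : T.biUnion A.basicSetOf = (T.image A.basicSetOf).biUnion id := by
    rw [Finset.image_biUnion]; rfl
  rw [hunion, simpleQuantity,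
    Finset.sum_biUnion ((A.pairwiseDisjoint_parts).subset hsub)]
  exact Submodule.sum_mem _ fun D hD => A.simpleQuantity_mem_span (hsub hD)

variable {H : Type*} [Group H]

lemma mapDomainAlgHom_simpleQuantity [DecidableEq H] (φ : G →* H) {C : Finset G} {m : ℕ}
    (hm : ∀ c ∈ C, #{c' ∈ C | φ c' = φ c} = m) :
    MonoidAlgebra.mapDomainAlgHom F F φ (simpleQuantity F C)
      = (m : F) • simpleQuantity F (C.image φ) := by
  simp only [simpleQuantity, map_sum, MonoidAlgebra.mapDomainAlgHom_apply,
    MonoidAlgebra.mapDomain_single, Finset.smul_sum]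
  rw [Finset.sum_comp (fun h => MonoidAlgebra.single h (1 : F)) φ]
  refine Finset.sum_congr rfl fun h hh => ?_
  obtain ⟨c, hc, rfl⟩ := Finset.mem_image.mp hh
  rw [hm c hc, Nat.cast_smul_eq_nsmul]

variable [CharZero F] [DecidableEq H]

lemma card_fiber_eq (A : SchurRing F G) (φ : G →* H) (hker : A.IsASet φ.ker)
    {C C' : Finset G} (hC : C ∈ A.parts) (hC' : C' ∈ A.parts) {g₁ g₂ : G} (h₁ : g₁ ∈ C')
    (h₂ : g₂ ∈ C') : #{c ∈ C | φ c = φ g₁} = #{c ∈ C | φ c = φ g₂} := by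
  classical
  -- a finite union of basic sets that agrees with `ker φ` on `C' * C⁻¹`
  set E := ((C' ×ˢ C).image (fun p => p.1 * p.2⁻¹) |>.filter (· ∈ φ.ker)).biUnion A.basicSetOf
  have hE : simpleQuantity F E * simpleQuantity F C ∈ A.span :=
    A.mul_mem _ (A.simpleQuantity_biUnion_basicSetOf_mem_span _) _
      (A.simpleQuantity_mem_span hC)
  have hmemE : ∀ g ∈ C', ∀ c ∈ C, g * c⁻¹ ∈ E ↔ φ c = φ g := by
    intro g hg c hc
    rw [eq_comm, ← mul_inv_eq_one, ← map_inv, ← map_mul, ← MonoidHom.mem_ker]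
    constructor
    · intro h
      obtain ⟨k, hk, hmem⟩ := Finset.mem_biUnion.mp h
      exact hker.basicSetOf_subset (Finset.mem_filter.mp hk).2 hmem
    · intro h
      refine Finset.mem_biUnion.mpr ⟨g * c⁻¹, ?_, A.mem_basicSetOf _⟩
      exact Finset.mem_filter.mpr ⟨Finset.mem_image.mpr ⟨(g, c), by simp [hg, hc], rfl⟩, h⟩
  have hcoeff : ∀ g ∈ C', (simpleQuantity F E * simpleQuantity F C).coeff g
      = #{c ∈ C | φ c = φ g} := by
    intro g hg
    rw [coeff_mul_simpleQuantity, Finset.natCast_card_filter]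
    exact Finset.sum_congr rfl fun c hc => by simp only [coeff_simpleQuantity, hmemE g hg c hc]
  exact_mod_cast (hcoeff g₁ h₁).symm.trans
    ((A.coeff_eq_of_mem_span hE hC' h₁ h₂).trans (hcoeff g₂ h₂))

lemma exists_mapDomainAlgHom_simpleQuantity (A : SchurRing F G) (φ : G →* H)
    (hker : A.IsASet φ.ker) {C : Finset G} (hC : C ∈ A.parts) :
    ∃ m : ℕ, 0 < m ∧ MonoidAlgebra.mapDomainAlgHom F F φ (simpleQuantity F C)
      = (m : F) • simpleQuantity F (C.image φ) := by
  obtain ⟨g, hg⟩ := A.parts_nonempty C hC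
  refine ⟨#{c ∈ C | φ c = φ g}, Finset.card_pos.mpr ⟨g, by simp [hg]⟩,
    mapDomainAlgHom_simpleQuantity φ fun c hc => ?_⟩
  exact card_fiber_eq A φ hker hC hC hc hg

lemma image_subset_image_of_map_eq (A : SchurRing F G) (φ : G →* H) (hker : A.IsASet φ.ker)
    {C₁ C₂ : Finset G} (hC₁ : C₁ ∈ A.parts) (hC₂ : C₂ ∈ A.parts) {a₁ a₂ : G} (ha₁ : a₁ ∈ C₁)
    (ha₂ : a₂ ∈ C₂) (h : φ a₁ = φ a₂) : C₂.image φ ⊆ C₁.image φ := by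
  intro _ hc
  obtain ⟨c₂, hc₂, rfl⟩ := Finset.mem_image.mp hc
  have hpos : 0 < #{c ∈ C₁ | φ c = φ c₂} := by
    rw [card_fiber_eq A φ hker hC₁ hC₂ hc₂ ha₂]
    exact Finset.card_pos.mpr ⟨a₁, by simp [ha₁, h]⟩
  obtain ⟨c₁, hc₁⟩ := Finset.card_pos.mp hpos
  obtain ⟨hc₁C, hc₁φ⟩ := Finset.mem_filter.mp hc₁
  exact Finset.mem_image.mpr ⟨c₁, hc₁C, hc₁φ⟩

lemma span_simpleQuantity_image_parts (A : SchurRing F G) (φ : G →* H)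
    (hker : A.IsASet φ.ker) :
    Submodule.span F (simpleQuantity F '' (Finset.image φ '' A.parts))
      = A.span.map (MonoidAlgebra.mapDomainAlgHom F F φ).toLinearMap := by
  rw [SchurRing.span, Submodule.map_span]
  apply le_antisymm <;> rw [Submodule.span_le]
  · rintro _ ⟨_, ⟨C, hC, rfl⟩, rfl⟩
    obtain ⟨m, hm, heq⟩ := exists_mapDomainAlgHom_simpleQuantity A φ hker hC
    have hm' : (m : F) ≠ 0 := by exact_mod_cast hm.ne'
    rw [SetLike.mem_coe, ← inv_smul_smul₀ hm' (simpleQuantity F _), ← heq]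
    exact Submodule.smul_mem _ _ (Submodule.subset_span ⟨_, ⟨C, hC, rfl⟩, rfl⟩)
  · rintro _ ⟨_, ⟨C, hC, rfl⟩, rfl⟩
    obtain ⟨m, -, heq⟩ := exists_mapDomainAlgHom_simpleQuantity A φ hker hC
    rw [SetLike.mem_coe, AlgHom.toLinearMap_apply, heq]
    exact Submodule.smul_mem _ _ (Submodule.subset_span ⟨_, ⟨C, hC, rfl⟩, rfl⟩)

noncomputable def map (A : SchurRing F G) (φ : G →* H) (hφ : Function.Surjective φ)
    (hker : A.IsASet φ.ker) : SchurRing F H where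
  parts := Finset.image φ '' A.parts
  parts_nonempty := by
    rintro _ ⟨C, hC, rfl⟩
    exact (A.parts_nonempty C hC).image φ
  cover h := by
    obtain ⟨g, rfl⟩ := hφ h
    exact ⟨_, ⟨_, A.basicSetOf_mem g, rfl⟩, Finset.mem_image_of_mem φ (A.mem_basicSetOf g)⟩
  eq_of_mem := by
    rintro _ ⟨C₁, hC₁, rfl⟩ _ ⟨C₂, hC₂, rfl⟩ _ h₁ h₂
    obtain ⟨a₁, ha₁, rfl⟩ := Finset.mem_image.mp h₁
    obtain ⟨a₂, ha₂, h⟩ := Finset.mem_image.mp h₂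
    exact (image_subset_image_of_map_eq A φ hker hC₂ hC₁ ha₂ ha₁ h).antisymm
      (image_subset_image_of_map_eq A φ hker hC₁ hC₂ ha₁ ha₂ h.symm)
  one_mem := ⟨{1}, A.one_mem, by simp⟩
  inv_mem := by
    rintro _ ⟨C, hC, rfl⟩
    obtain ⟨C', hC', hinv⟩ := A.inv_mem C hC
    refine ⟨C'.image φ, ⟨C', hC', rfl⟩, fun h => ?_⟩
    simp only [Finset.mem_image, hinv]
    constructor
    · rintro ⟨a, ha, rfl⟩
      exact ⟨a⁻¹, ha, map_inv φ a⟩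
    · rintro ⟨b, hb, hbh⟩
      exact ⟨b⁻¹, by rwa [inv_inv], by rw [map_inv, hbh, inv_inv]⟩
  mul_mem := by
    rw [span_simpleQuantity_image_parts A φ hker]
    rintro _ ⟨x, hx, rfl⟩ _ ⟨y, hy, rfl⟩
    exact ⟨x * y, A.mul_mem x hx y hy, map_mul (MonoidAlgebra.mapDomainAlgHom F F φ) x y⟩

end SchurRing

/-- If `φ : G → H` has kernel an `A`-subgroup, then the image of `A` under `φ`
is a Schur ring over `φ(G)`, with basic sets the images of the basic sets of `A`. -/
theorem quotient_schurRing {F G H : Type*} [Field F] [CharZero F] [Group G] [Group H]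
    (φ : G →* H) (A : SchurRing F G) (hker : A.IsASet ↑φ.ker) :
    ∃ B : SchurRing F ↥φ.range,
      B.parts = {D : Finset ↥φ.range |
        ∃ C ∈ A.parts, (↑D : Set ↥φ.range) = φ.rangeRestrict '' (↑C : Set G)} := by
  classical
  rw [← MonoidHom.ker_rangeRestrict] at hker
  refine ⟨A.map φ.rangeRestrict φ.rangeRestrict_surjective hker, ?_⟩
  ext D
  simp only [SchurRing.map, Set.mem_image, Set.mem_ofPred_eq, ← Finset.coe_image, Finset.coe_inj,
    eq_comm]
end

section
/- Let G = ⟨a⟩ × ⟨b⟩ be free abelian of rank two and A a Schur ring over G with ⟨a⟩ an A-subgroup. If D is the basic set of A containing b, then D is one of: {b}; {b, b^{-1}}; {b a^{i_0}, b} for some nonzero integer i_0; {b^{-1} a^{i_1}, b} for some nonzero integer i_1; or {b, b a^{i_2}, b^{-1}, b^{-1} a^{-i_2}} for some nonzero integer i_2. -/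
/-- The free abelian group of rank two, written multiplicatively. -/
abbrev Z2 := Multiplicative (ℤ × ℤ)

/-- The first generator `a` of `Z × Z`. -/
def ga : Z2 := Multiplicative.ofAdd (1, 0)

/-- The second generator `b` of `Z × Z`. -/
def gb : Z2 := Multiplicative.ofAdd (0, 1)

open scoped Finset Pointwise

lemma Finset.exists_eq_pair_of_gap {S : Finset ℤ} (hS : S.Nonempty) {W : ℤ}
    (hgap : ∀ i ∈ S, ∀ i' ∈ S, i - i' ≤ W) (hshift : ∀ i ∈ S, i - W ∈ S ∨ i + W ∈ S) :
    ∃ m, ∀ i, i ∈ S ↔ i = m ∨ i = m + W := by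
  set M := S.max' hS
  have hM : M ∈ S := S.max'_mem hS
  have hle : ∀ i ∈ S, i ≤ M := fun i hi ↦ S.le_max' i hi
  have hW : 0 ≤ W := by simpa using hgap M hM M hM
  have hMW : M - W ∈ S := by
    rcases hshift M hM with h | h
    · exact h
    · have := hle _ h
      rwa [show W = 0 by omega, sub_zero]
  refine ⟨M - W, fun i ↦ ⟨fun hi ↦ ?_, ?_⟩⟩
  · have := hle i hi
    have := hgap M hM i hi
    rcases hshift i hi with h | h
    · have := hgap M hM _ h
      omega
    · have := hle _ h
      omega
  · rintro (rfl | rfl)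
    · exact hMW
    · simpa using hM

lemma Multiset.prod_eq_one_of_map_inv_eq {G : Type*} [CommGroup G] [IsMulTorsionFree G]
    {Q : Multiset G} (hQ : Q.map (·⁻¹) = Q) : Q.prod = 1 := by
  have h : Q.prod⁻¹ = Q.prod := by rw [← Multiset.prod_map_inv', hQ]
  rw [← sq_eq_one, sq]
  exact mul_eq_one_iff_eq_inv.2 h.symm

section MulCount

open Finset MonoidAlgebra

variable {G : Type*} [Group G] [DecidableEq G]

def mulCount (C D : Finset G) (g : G) : ℕ := #{p ∈ C ×ˢ D | p.1 * p.2 = g}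

lemma mulCount_pos_iff {C D : Finset G} {g : G} : 0 < mulCount C D g ↔ g ∈ C * D := by
  simp [mulCount, Finset.card_pos, Finset.Nonempty, Finset.mem_mul, and_assoc]

variable {K : Type*} [Field K]

lemma coeff_simpleQuantity (C : Finset G) (g : G) :
    (simpleQuantity K C).coeff g = if g ∈ C then 1 else 0 := by
  simp [simpleQuantity, coeff_sum, coeff_single, Finsupp.single_apply]

lemma coeff_simpleQuantity_mul (C D : Finset G) (g : G) :
    (simpleQuantity K C * simpleQuantity K D).coeff g = mulCount C D g := by
  simp only [simpleQuantity, sum_mul_sum, single_mul_single, mul_one, ← sum_product',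
    coeff_sum, coeff_single, Finsupp.finsetSum_apply, Finsupp.single_apply, mulCount]
  rw [Finset.natCast_card_filter]

end MulCount

namespace SchurRing

open Finset MonoidAlgebra

section Group

variable {F G : Type*} [Field F] [Group G] (A : SchurRing F G)

noncomputable def basicSet (g : G) : Finset G := (A.cover g).choose

lemma basicSet_mem_parts (g : G) : A.basicSet g ∈ A.parts := (A.cover g).choose_spec.1

lemma mem_basicSet (g : G) : g ∈ A.basicSet g := (A.cover g).choose_spec.2

variable {A}

lemma basicSet_eq {C : Finset G} (hC : C ∈ A.parts) {g : G} (hg : g ∈ C) : A.basicSet g = C :=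
  A.eq_of_mem _ (A.basicSet_mem_parts g) _ hC g (A.mem_basicSet g) hg

lemma basicSet_eq_basicSet {g h : G} (hh : h ∈ A.basicSet g) : A.basicSet h = A.basicSet g :=
  basicSet_eq (A.basicSet_mem_parts g) hh

variable (A) in
lemma basicSet_one : A.basicSet 1 = {1} := basicSet_eq A.one_mem (mem_singleton_self 1)

lemma IsASet.basicSet_subset {S : Set G} (hS : A.IsASet S) {g : G} (hg : g ∈ S) :
    ↑(A.basicSet g) ⊆ S :=
  hS _ (A.basicSet_mem_parts g) ⟨g, A.mem_basicSet g, hg⟩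

lemma isASet_of_forall {S : Set G} (hS : ∀ g ∈ S, ↑(A.basicSet g) ⊆ S) : A.IsASet S := by
  rintro C hC ⟨g, hgC, hgS⟩
  rw [← basicSet_eq hC hgC]
  exact hS g hgS

variable (A) in
lemma isASet_basicSet (g : G) : A.IsASet ↑(A.basicSet g) :=
  isASet_of_forall fun _ hh ↦ (basicSet_eq_basicSet hh).le

lemma coeff_eq_of_mem_span_s10 {x : MonoidAlgebra F G} (hx : x ∈ A.span) {g h : G}
    (hh : h ∈ A.basicSet g) : x.coeff h = x.coeff g := by
  classical
  induction hx using Submodule.span_induction with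
  | mem y hy =>
    obtain ⟨C, hC, rfl⟩ := hy
    have : h ∈ C ↔ g ∈ C :=
      ⟨fun hhC ↦ by rw [← basicSet_eq hC hhC, basicSet_eq_basicSet hh]; exact A.mem_basicSet g,
        fun hgC ↦ by rw [← basicSet_eq hC hgC]; exact hh⟩
    simp only [coeff_simpleQuantity, this]
  | zero => rfl
  | add y z _ _ hy hz => simp only [coeff_add, Finsupp.add_apply, hy, hz]
  | smul c y _ hy => simp only [coeff_smul, Finsupp.smul_apply, hy]

variable (A) in
lemma one_mem_span : (1 : MonoidAlgebra F G) ∈ A.span := by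
  have : simpleQuantity F {(1 : G)} = 1 := by simp [simpleQuantity, one_def]
  exact this ▸ Submodule.subset_span ⟨{1}, A.one_mem, rfl⟩

variable (A) in
noncomputable def toSubalgebra : Subalgebra F (MonoidAlgebra F G) :=
  A.span.toSubalgebra A.one_mem_span fun x y hx hy ↦ A.mul_mem x hx y hy

variable [DecidableEq G]

lemma inv_mem_parts {C : Finset G} (hC : C ∈ A.parts) : C⁻¹ ∈ A.parts := by
  obtain ⟨D, hD, hDC⟩ := A.inv_mem C hC
  convert hD using 1
  ext g
  rw [Finset.mem_inv', hDC]

variable (A) in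
lemma basicSet_inv (g : G) : A.basicSet g⁻¹ = (A.basicSet g)⁻¹ :=
  basicSet_eq (inv_mem_parts (A.basicSet_mem_parts g)) (Finset.inv_mem_inv (A.mem_basicSet g))

lemma inv_eq_self_of_mem {D : Finset G} (hD : D ∈ A.parts) {g : G} (hg : g ∈ D)
    (hg' : g⁻¹ ∈ D) : D⁻¹ = D := by
  rw [← basicSet_eq hD hg, ← basicSet_inv, basicSet_eq hD hg', basicSet_eq hD hg]

lemma IsASet.inv {S : Set G} (hS : A.IsASet S) : A.IsASet S⁻¹ :=
  isASet_of_forall fun g hg h hh ↦ hS.basicSet_subset hg <| by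
    rw [Finset.mem_coe, basicSet_inv]
    exact Finset.inv_mem_inv hh

variable [CharZero F]

lemma mulCount_eq {C D : Finset G} (hC : C ∈ A.parts) (hD : D ∈ A.parts) {g h : G}
    (hh : h ∈ A.basicSet g) : mulCount C D h = mulCount C D g := by
  have := A.coeff_eq_of_mem_span_s10
    (A.mul_mem _ (Submodule.subset_span ⟨C, hC, rfl⟩) _ (Submodule.subset_span ⟨D, hD, rfl⟩)) hh
  simpa [coeff_simpleQuantity_mul] using this

lemma isASet_mul {C D : Finset G} (hC : C ∈ A.parts) (hD : D ∈ A.parts) :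
    A.IsASet ↑(C * D) :=
  isASet_of_forall fun _ hg _ hh ↦ mulCount_pos_iff.1 <|
    (mulCount_eq hC hD hh).symm ▸ mulCount_pos_iff.2 hg

lemma subset_basicSet_mul {D : Finset G} (hD : D ∈ A.parts) {d g : G} (hd : d ∈ D)
    (hgd : g * d ∈ D) : ↑D ⊆ (↑(A.basicSet g * D) : Set G) := by
  have := (isASet_mul (A.basicSet_mem_parts g) hD).basicSet_subset
    (Finset.mem_coe.2 (Finset.mul_mem_mul (A.mem_basicSet g) hd))
  rwa [basicSet_eq hD hgd] at this

lemma basicSet_subset_mul_of_inv_mul_mem {H : Set G} (hH : A.IsASet H) {g h : G}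
    (hgh : g⁻¹ * h ∈ H) : ↑(A.basicSet h) ⊆ (↑(A.basicSet g) : Set G) * H := by
  have hE := hH.basicSet_subset hgh
  calc (↑(A.basicSet h) : Set G)
      ⊆ ↑(A.basicSet g * A.basicSet (g⁻¹ * h)) :=
        (isASet_mul (A.basicSet_mem_parts g) (A.basicSet_mem_parts _)).basicSet_subset
          (by simpa using Finset.mem_coe.2 <|
            Finset.mul_mem_mul (A.mem_basicSet g) (A.mem_basicSet (g⁻¹ * h)))
    _ ⊆ ↑(A.basicSet g) * H := by rw [Finset.coe_mul]; exact Set.mul_subset_mul_left hE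

end Group

section CommGroup

variable {F G : Type*} [Field F] [CommGroup G] {A : SchurRing F G}

lemma coeff_simpleQuantity_pow (K : Type*) [Field K] (C : Finset G) (n : ℕ) (g : G) :
    (simpleQuantity K C ^ n).coeff g =
      (((∑ c ∈ C, single c 1 : MonoidAlgebra ℕ G) ^ n).coeff g : K) := by
  have : simpleQuantity K C = mapRingHom G (Nat.castRingHom K) (∑ c ∈ C, single c 1) := by
    simp [simpleQuantity, map_sum]
  rw [this, ← map_pow, coeff_mapRingHom, Nat.coe_castRingHom]

variable [DecidableEq G]

lemma coeff_simpleQuantity_pow_char (p : ℕ) [Fact p.Prime] (C : Finset G) (g : G) :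
    (simpleQuantity (ZMod p) C ^ p).coeff g = #{c ∈ C | c ^ p = g} := by
  have : CharP (MonoidAlgebra (ZMod p) G) p :=
    charP_of_injective_ringHom (f := singleOneRingHom) single_right_injective p
  rw [simpleQuantity, sum_pow_char]
  simp only [single_pow, one_pow, coeff_sum, coeff_single, Finsupp.finsetSum_apply,
    Finsupp.single_apply]
  rw [Finset.natCast_card_filter]

variable [CharZero F]

lemma IsASet.image_pow_prime {p : ℕ} (hp : p.Prime) (hinj : Function.Injective fun g : G ↦ g ^ p)
    {S : Set G} (hS : A.IsASet S) : A.IsASet ((· ^ p) '' S) := by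
  have := Fact.mk hp
  refine isASet_of_forall ?_
  rintro _ ⟨s, hs, rfl⟩ h hh
  set C := A.basicSet s
  -- Modulo `p`, `N x` counts the `c ∈ C` with `c ^ p = x`: the Frobenius map is additive.
  let N : G → ℕ := fun x ↦ ((∑ c ∈ C, single c 1 : MonoidAlgebra ℕ G) ^ p).coeff x
  have hN : N h = N (s ^ p) := by
    apply Nat.cast_injective (R := F)
    simp only [N, ← coeff_simpleQuantity_pow]
    exact coeff_eq_of_mem_span_s10
      (A.toSubalgebra.pow_mem (Submodule.subset_span ⟨C, A.basicSet_mem_parts s, rfl⟩) p) hh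
  have hs1 : #{c ∈ C | c ^ p = s ^ p} = 1 :=
    Finset.card_eq_one.2 ⟨s, Finset.eq_singleton_iff_unique_mem.2
      ⟨Finset.mem_filter.2 ⟨A.mem_basicSet s, rfl⟩, fun _ hc ↦ hinj (Finset.mem_filter.1 hc).2⟩⟩
  have hh0 : #{c ∈ C | c ^ p = h} ≠ 0 := by
    intro h0
    have := congrArg (Nat.cast : ℕ → ZMod p) hN
    simp only [N, ← coeff_simpleQuantity_pow, coeff_simpleQuantity_pow_char, h0, hs1,
      Nat.cast_zero, Nat.cast_one] at this
    exact zero_ne_one this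
  obtain ⟨c, hc⟩ := Finset.card_ne_zero.1 hh0
  rw [Finset.mem_filter] at hc
  exact ⟨c, hS.basicSet_subset hs hc.1, hc.2⟩

variable [IsMulTorsionFree G]

lemma IsASet.image_pow {n : ℕ} (hn : n ≠ 0) {S : Set G} (hS : A.IsASet S) :
    A.IsASet ((· ^ n) '' S) := by
  induction n using Nat.recOnMul generalizing S with
  | zero => exact absurd rfl hn
  | one => simpa using hS
  | prime p hp => exact hS.image_pow_prime hp (pow_left_injective hp.ne_zero)
  | mul a b iha ihb =>
    have hab : (· ^ (a * b)) '' S = (· ^ a) '' ((· ^ b) '' S) := by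
      rw [Set.image_image]
      simp_rw [mul_comm a b, pow_mul]
    rw [hab]
    exact iha (left_ne_zero_of_mul hn) (ihb (right_ne_zero_of_mul hn) hS)

lemma IsASet.image_zpow {k : ℤ} (hk : k ≠ 0) {S : Set G} (hS : A.IsASet S) :
    A.IsASet ((· ^ k) '' S) := by
  obtain ⟨n, rfl | rfl⟩ := Int.eq_nat_or_neg k
  · simpa using hS.image_pow (n := n) (by omega)
  · have : (· ^ (-n : ℤ)) '' S = ((· ^ n) '' S)⁻¹ := by
      rw [← Set.image_inv_eq_inv, Set.image_image]
      simp
    rw [this]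
    exact (hS.image_pow (n := n) (by omega)).inv

variable (A) in
lemma basicSet_zpow_subset {k : ℤ} (hk : k ≠ 0) (g : G) :
    ↑(A.basicSet (g ^ k)) ⊆ (· ^ k) '' (↑(A.basicSet g) : Set G) :=
  ((A.isASet_basicSet g).image_zpow hk).basicSet_subset ⟨g, A.mem_basicSet g, rfl⟩

lemma prod_filter_mul_eq_one {H : Subgroup G} [DecidablePred (· ∈ H)]
    (hH : ∀ g ∈ H, g⁻¹ ∈ A.basicSet g) {C D : Finset G} (hC : C ∈ A.parts) (hD : D ∈ A.parts) :
    ∏ p ∈ C ×ˢ D with p.1 * p.2 ∈ H, p.1 * p.2 = 1 := by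
  rw [Finset.prod_eq_multiset_prod]
  set Q := ({p ∈ C ×ˢ D | p.1 * p.2 ∈ H}).val.map fun p ↦ p.1 * p.2
  have hcount : ∀ x : G, Q.count x = if x ∈ H then mulCount C D x else 0 := by
    intro x
    rw [Multiset.count_map, ← Finset.filter_val, Finset.card_val, Finset.filter_filter, mulCount]
    split_ifs with hx
    · exact congrArg _ <| Finset.filter_congr fun p _ ↦
        ⟨fun h ↦ h.2.symm, fun h ↦ ⟨h ▸ hx, h.symm⟩⟩
    · simp only [Finset.card_eq_zero, Finset.filter_eq_empty_iff]
      rintro p - ⟨hp, rfl⟩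
      exact hx hp
  refine Multiset.prod_eq_one_of_map_inv_eq (Multiset.ext.2 fun g ↦ ?_)
  have hinv := Multiset.count_map_eq_count' (·⁻¹) Q inv_injective g⁻¹
  rw [inv_inv] at hinv
  rw [hinv, hcount, hcount]
  simp only [inv_mem_iff]
  split_ifs with hg
  · exact mulCount_eq hC hD (hH _ hg)
  · rfl

end CommGroup

end SchurRing

namespace Z2

def mk (i j : ℤ) : Z2 := Multiplicative.ofAdd (i, j)

def fst (z : Z2) : ℤ := (Multiplicative.toAdd z).1

def snd (z : Z2) : ℤ := (Multiplicative.toAdd z).2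

lemma exists_eq_mk (z : Z2) : ∃ i j, z = mk i j := ⟨fst z, snd z, rfl⟩

@[simp] lemma mk_mul_mk (i j i' j' : ℤ) : mk i j * mk i' j' = mk (i + i') (j + j') := rfl

@[simp] lemma inv_mk (i j : ℤ) : (mk i j)⁻¹ = mk (-i) (-j) := rfl

@[simp] lemma mk_zpow (i j k : ℤ) : mk i j ^ k = mk (k * i) (k * j) := by
  simp [mk, ← ofAdd_zsmul]

@[simp] lemma mk_inj {i j i' j' : ℤ} : mk i j = mk i' j' ↔ i = i' ∧ j = j' := by
  simp [mk]

lemma one_eq : (1 : Z2) = mk 0 0 := rfl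

lemma ga_eq : ga = mk 1 0 := rfl

lemma gb_eq : gb = mk 0 1 := rfl

lemma mk_mem_zpowers_ga_iff {i j : ℤ} : mk i j ∈ Subgroup.zpowers ga ↔ j = 0 := by
  simp [Subgroup.mem_zpowers_iff, ga_eq, eq_comm]

lemma finset_ext {S T : Finset Z2} (h : ∀ i j, mk i j ∈ S ↔ mk i j ∈ T) : S = T :=
  Finset.ext fun z ↦ h (fst z) (snd z)

lemma exists_max_gap {D : Finset Z2} (hD : D.Nonempty) :
    ∃ W ≥ 0, (∀ i i' j, mk i j ∈ D → mk i' j ∈ D → i - i' ≤ W) ∧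
      ∃ i j, mk i j ∈ D ∧ mk (i - W) j ∈ D := by
  obtain ⟨d, hd⟩ := hD
  obtain ⟨p, hp, hmax⟩ := Finset.exists_max_image {p ∈ D ×ˢ D | snd p.1 = snd p.2}
    (fun p ↦ fst p.1 - fst p.2) ⟨(d, d), by simp [hd]⟩
  simp only [Finset.mem_filter, Finset.mem_product] at hp hmax
  refine ⟨fst p.1 - fst p.2, by simpa using hmax (d, d) ⟨⟨hd, hd⟩, rfl⟩,
    fun i i' j hi hi' ↦ hmax (mk i j, mk i' j) ⟨⟨hi, hi'⟩, rfl⟩, fst p.1, snd p.1, hp.1.1, ?_⟩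
  rw [sub_sub_cancel, hp.2]
  exact hp.1.2

variable {F : Type*} [Field F] {A : SchurRing F Z2}

lemma eq_mk_zero_of_mem_basicSet (ha : A.IsASet ↑(Subgroup.zpowers ga)) {k : ℤ} {z : Z2}
    (hz : z ∈ A.basicSet (mk k 0)) : ∃ i, z = mk i 0 := by
  obtain ⟨i, j, rfl⟩ := exists_eq_mk z
  have := ha.basicSet_subset (mk_mem_zpowers_ga_iff.2 rfl) hz
  exact ⟨i, by rw [mk_mem_zpowers_ga_iff.1 this]⟩

variable [CharZero F]

lemma basicSet_mk_one_subset (ha : A.IsASet ↑(Subgroup.zpowers ga)) :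
    A.basicSet (mk 1 0) ⊆ {mk 1 0, mk (-1) 0} := by
  intro u hu
  obtain ⟨x, rfl⟩ := eq_mk_zero_of_mem_basicSet ha hu
  have hx : x ≠ 0 := by
    rintro rfl
    have h1 : A.basicSet (mk 1 0) = {1} := A.eq_of_mem _ (A.basicSet_mem_parts _) _ A.one_mem 1
      (by rwa [one_eq]) (Finset.mem_singleton_self 1)
    simpa [h1, one_eq] using A.mem_basicSet (mk 1 0)
  have hself : A.basicSet (mk 1 0 ^ x) = A.basicSet (mk 1 0) :=
    SchurRing.basicSet_eq_basicSet (by simpa using hu)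
  obtain ⟨v, hv, hvx⟩ := A.basicSet_zpow_subset hx (mk 1 0) <| by
    rw [hself]
    exact A.mem_basicSet (mk 1 0)
  obtain ⟨y, rfl⟩ := eq_mk_zero_of_mem_basicSet ha hv
  have hxy : x * y = 1 := by simpa using hvx
  rcases Int.eq_one_or_neg_one_of_mul_eq_one hxy with rfl | rfl <;> simp

lemma basicSet_mk_subset (ha : A.IsASet ↑(Subgroup.zpowers ga)) (k : ℤ) :
    A.basicSet (mk k 0) ⊆ {mk k 0, mk (-k) 0} := by
  rcases eq_or_ne k 0 with rfl | hk
  · simp [← one_eq, SchurRing.basicSet_one]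
  intro u hu
  obtain ⟨v, hv, rfl⟩ := A.basicSet_zpow_subset hk (mk 1 0) (by simpa using hu)
  have : v = mk 1 0 ∨ v = mk (-1) 0 := by simpa using basicSet_mk_one_subset ha hv
  rcases this with rfl | rfl <;> simp

lemma neg_mem_basicSet_mk (ha : A.IsASet ↑(Subgroup.zpowers ga)) {W : ℤ} (hW : W ≠ 0)
    (hsym : mk (-W) 0 ∈ A.basicSet (mk W 0)) (k : ℤ) : mk (-k) 0 ∈ A.basicSet (mk k 0) := by
  have h1 : mk (-1) 0 ∈ A.basicSet (mk 1 0) := by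
    obtain ⟨v, hv, hvW⟩ := A.basicSet_zpow_subset hW (mk 1 0) (by simpa using hsym)
    have : v = mk 1 0 ∨ v = mk (-1) 0 := by simpa using basicSet_mk_one_subset ha hv
    rcases this with rfl | rfl
    · simp at hvW
      omega
    · exact hv
  have hnat : ∀ n : ℕ, mk (-n) 0 ∈ A.basicSet (mk n 0) := by
    intro n
    rcases Nat.eq_zero_or_pos n with rfl | hn
    · exact A.mem_basicSet _
    induction n, hn using Nat.le_induction with
    | base => simpa using h1
    | succ n hn ih =>
      by_contra hc
      have hmul := SchurRing.isASet_mul (A.basicSet_mem_parts (mk (n + 1) 0))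
        (A.basicSet_mem_parts (mk 1 0))
      have hn' : mk n 0 ∈ A.basicSet (mk (n + 1) 0) * A.basicSet (mk 1 0) :=
        Finset.mem_mul.2 ⟨_, A.mem_basicSet _, _, h1, by simp⟩
      obtain ⟨e, he, u, hu, heu⟩ := Finset.mem_mul.1 (hmul.basicSet_subset hn' ih)
      have he' : e = mk (n + 1) 0 ∨ e = mk (-(n + 1)) 0 := by
        simpa using basicSet_mk_subset ha _ he
      have hu' : u = mk 1 0 ∨ u = mk (-1) 0 := by simpa using basicSet_mk_one_subset ha hu
      rcases he' with rfl | rfl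
      · rcases hu' with rfl | rfl <;> simp at heu <;> omega
      · exact hc (by simpa using he)
  obtain ⟨n, rfl | rfl⟩ := Int.eq_nat_or_neg k
  · exact hnat n
  · have : mk (-n) 0 = (mk n 0)⁻¹ := by simp
    rw [this, SchurRing.basicSet_inv, Finset.mem_inv']
    simpa using hnat n

lemma eq_one_or_neg_one_of_mk_mem (ha : A.IsASet ↑(Subgroup.zpowers ga)) {D : Finset Z2}
    (hD : D ∈ A.parts) (hbD : mk 0 1 ∈ D) {i j : ℤ} (h : mk i j ∈ D) : j = 1 ∨ j = -1 := by
  have hj : j ≠ 0 := by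
    rintro rfl
    simpa [mk_mem_zpowers_ga_iff] using ha D hD ⟨_, h, mk_mem_zpowers_ga_iff.2 rfl⟩ hbD
  have hcoset : mk 0 1 ∈ (↑(A.basicSet (mk 0 j)) : Set Z2) * ↑(Subgroup.zpowers ga) := by
    refine SchurRing.basicSet_subset_mul_of_inv_mul_mem ha (h := mk i j)
      (by simp [mk_mem_zpowers_ga_iff]) ?_
    rw [SchurRing.basicSet_eq hD h]
    exact hbD
  obtain ⟨q, hq, w, hw, hqw⟩ := Set.mem_mul.1 hcoset
  obtain ⟨v, hv, rfl⟩ := A.basicSet_zpow_subset hj (mk 0 1) (by simpa using hq)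
  obtain ⟨a, b, rfl⟩ := exists_eq_mk v
  obtain ⟨c, d, rfl⟩ := exists_eq_mk w
  obtain rfl : d = 0 := mk_mem_zpowers_ga_iff.1 hw
  have : j * b = 1 := by
    simp at hqw
    omega
  exact Int.eq_one_or_neg_one_of_mul_eq_one this

lemma mk_mem_iff_of_mk_zero_one_mem (ha : A.IsASet ↑(Subgroup.zpowers ga)) {D : Finset Z2}
    (hD : D ∈ A.parts) (hbD : mk 0 1 ∈ D) (i j : ℤ) :
    mk i j ∈ D ↔ j = 1 ∧ mk i 1 ∈ D ∨ j = -1 ∧ mk i (-1) ∈ D := by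
  refine ⟨fun h ↦ ?_, by rintro (⟨rfl, h⟩ | ⟨rfl, h⟩) <;> exact h⟩
  rcases eq_one_or_neg_one_of_mk_mem ha hD hbD h with rfl | rfl <;> simp [h]

lemma sub_mem_or_add_mem (ha : A.IsASet ↑(Subgroup.zpowers ga)) {D : Finset Z2}
    (hD : D ∈ A.parts) {W i₀ j₀ : ℤ} (h₀ : mk i₀ j₀ ∈ D) (h₀' : mk (i₀ - W) j₀ ∈ D) {i j : ℤ}
    (h : mk i j ∈ D) :
    mk (i - W) j ∈ D ∨ mk (-W) 0 ∈ A.basicSet (mk W 0) ∧ mk (i + W) j ∈ D := by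
  have hsub := SchurRing.subset_basicSet_mul hD h₀' (g := mk W 0) (by simpa using h₀)
  obtain ⟨e, he, d, hd, hed⟩ := Finset.mem_mul.1 (Finset.mem_coe.1 (hsub h))
  have he' : e = mk W 0 ∨ e = mk (-W) 0 := by simpa using basicSet_mk_subset ha W he
  rcases he' with rfl | rfl
  · left
    obtain rfl : d = mk (i - W) j := by
      rw [← inv_mul_eq_of_eq_mul hed.symm]
      simp
      omega
    exact hd
  · right
    obtain rfl : d = mk (i + W) j := by
      rw [← inv_mul_eq_of_eq_mul hed.symm]
      simp [add_comm]
    exact ⟨he, hd⟩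

lemma exists_rows (ha : A.IsASet ↑(Subgroup.zpowers ga)) {D : Finset Z2} (hD : D ∈ A.parts)
    (hbD : mk 0 1 ∈ D) :
    ∃ W ≥ 0, (0 < W → ∀ k, mk (-k) 0 ∈ A.basicSet (mk k 0)) ∧
      ∀ i₀ j, mk i₀ j ∈ D → ∃ m, ∀ i, mk i j ∈ D ↔ i = m ∨ i = m + W := by
  obtain ⟨W, hW, hgap, i₀, j₀, h₀, h₀'⟩ := exists_max_gap ⟨_, hbD⟩
  have hshift := fun {i j} (h : mk i j ∈ D) ↦ sub_mem_or_add_mem ha hD h₀ h₀' h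
  refine ⟨W, hW, fun hWpos ↦ ?_, fun i₁ j h₁ ↦ ?_⟩
  · rcases hshift h₀' with h | ⟨hsym, -⟩
    · have := hgap _ _ _ h₀ h
      omega
    · exact neg_mem_basicSet_mk ha hWpos.ne' hsym
  · let S := D.preimage (mk · j) fun _ _ _ _ h ↦ (mk_inj.1 h).1
    have hS : ∀ i, i ∈ S ↔ mk i j ∈ D := fun _ ↦ Finset.mem_preimage
    obtain ⟨m, hm⟩ := Finset.exists_eq_pair_of_gap ⟨i₁, (hS i₁).2 h₁⟩
      (fun i hi i' hi' ↦ hgap i i' j ((hS i).1 hi) ((hS i').1 hi'))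
      (fun i hi ↦ by simpa only [hS] using (hshift ((hS i).1 hi)).imp_right And.right)
    exact ⟨m, fun i ↦ (hS i).symm.trans (hm i)⟩

lemma false_of_rows {D : Finset Z2} (hD : D ∈ A.parts)
    (hsym : ∀ k, mk (-k) 0 ∈ A.basicSet (mk k 0)) {W s t : ℤ} (hW : 0 < W)
    (hs : s = W ∨ s = -W) (ht : t ≠ 0) (htW : t + W ≠ 0)
    (hmem : ∀ i j, mk i j ∈ D ↔ j = 1 ∧ (i = 0 ∨ i = s) ∨ j = -1 ∧ (i = t ∨ i = t + W)) :
    False := by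
  classical
  have hDeq : D = {mk 0 1, mk s 1, mk t (-1), mk (t + W) (-1)} := finset_ext fun i j ↦ by
    simp only [hmem, Finset.mem_insert, Finset.mem_singleton, mk_inj]
    omega
  have hH : ∀ g ∈ Subgroup.zpowers ga, g⁻¹ ∈ A.basicSet g := by
    intro g hg
    obtain ⟨i, j, rfl⟩ := exists_eq_mk g
    obtain rfl := mk_mem_zpowers_ga_iff.1 hg
    simpa using hsym i
  have hprod := SchurRing.prod_filter_mul_eq_one hH hD hD
  have hs0 : s ≠ 0 := by omega
  have htt : t ≠ t + W := by omega
  -- Only the eight pairs with one factor in each coset `b^{±1}⟨a⟩` contribute.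
  rw [hDeq, Finset.prod_filter, Finset.prod_product] at hprod
  simp [Finset.prod_insert, hs0.symm, htt, mk_mem_zpowers_ga_iff, one_eq] at hprod
  omega

end Z2

open Z2

/-- The five possible shapes of the basic set containing `b` when `⟨a⟩` is an
`A`-subgroup. -/
theorem basic_set_containing_b {F : Type*} [Field F] [CharZero F]
    (A : SchurRing F Z2) (ha : A.IsASet ↑(Subgroup.zpowers ga))
    (D : Finset Z2) (hD : D ∈ A.parts) (hbD : gb ∈ D) :
    D = {gb} ∨
    D = {gb, gb⁻¹} ∨
    (∃ i₀ : ℤ, i₀ ≠ 0 ∧ D = {gb * ga ^ i₀, gb}) ∨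
    (∃ i₁ : ℤ, i₁ ≠ 0 ∧ D = {gb⁻¹ * ga ^ i₁, gb}) ∨
    (∃ i₂ : ℤ, i₂ ≠ 0 ∧ D = {gb, gb * ga ^ i₂, gb⁻¹, gb⁻¹ * ga ^ (-i₂)}) := by
  rw [gb_eq] at hbD
  obtain ⟨W, hW, hsym, hrow⟩ := exists_rows ha hD hbD
  obtain ⟨s, hs, hrowb⟩ : ∃ s, (s = W ∨ s = -W) ∧ ∀ i, mk i 1 ∈ D ↔ i = 0 ∨ i = s := by
    obtain ⟨m, hm⟩ := hrow 0 1 hbD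
    have := (hm 0).1 hbD
    exact ⟨2 * m + W, by omega, fun i ↦ by rw [hm]; omega⟩
  have hmem : ∀ i j, mk i j ∈ D ↔ j = 1 ∧ (i = 0 ∨ i = s) ∨ j = -1 ∧ mk i (-1) ∈ D :=
    fun i j ↦ by rw [mk_mem_iff_of_mk_zero_one_mem ha hD hbD, hrowb]
  by_cases hb' : mk 0 (-1) ∈ D
  · have hDinv := SchurRing.inv_eq_self_of_mem hD hbD (by simpa using hb')
    have hrowb' : ∀ i, mk i (-1) ∈ D ↔ i = 0 ∨ i = -s := fun i ↦ by
      rw [← hDinv, Finset.mem_inv', inv_mk, neg_neg, hrowb]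
      omega
    rcases eq_or_ne s 0 with rfl | hs0
    · exact Or.inr <| Or.inl <| finset_ext fun i j ↦ by
        rw [hmem, hrowb']; simp [gb_eq]; omega
    · exact Or.inr <| Or.inr <| Or.inr <| Or.inr ⟨s, hs0, finset_ext fun i j ↦ by
        rw [hmem, hrowb']; simp [gb_eq, ga_eq]; omega⟩
  by_cases hneg : ∃ t, mk t (-1) ∈ D
  · obtain ⟨t, ht⟩ := hneg
    obtain ⟨m, hrowb'⟩ := hrow t (-1) ht
    have hm : m ≠ 0 ∧ m + W ≠ 0 :=
      ⟨fun h ↦ hb' ((hrowb' 0).2 (by omega)), fun h ↦ hb' ((hrowb' 0).2 (by omega))⟩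
    rcases hW.eq_or_lt with rfl | hW
    · exact Or.inr <| Or.inr <| Or.inr <| Or.inl ⟨m, hm.1, finset_ext fun i j ↦ by
        rw [hmem, hrowb']; simp [gb_eq, ga_eq]; omega⟩
    · exact (false_of_rows hD (hsym hW) hW hs hm.1 hm.2 fun i j ↦ by rw [hmem, hrowb']).elim
  push Not at hneg
  rcases eq_or_ne s 0 with rfl | hs0
  · exact Or.inl <| finset_ext fun i j ↦ by rw [hmem]; simp [hneg, gb_eq]; omega
  · exact Or.inr <| Or.inr <| Or.inl ⟨s, hs0, finset_ext fun i j ↦ by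
      rw [hmem]; simp [hneg, gb_eq, ga_eq]; omega⟩
end

section
/- Let G = ⟨a⟩ × ⟨b⟩ be free abelian of rank two, n a nonzero integer, and A the Schur ring over G whose basic sets are {a^i, a^{-i}} (i ∈ Z) and {a^{nj+i} b^{-j}, a^i b^j} (i, j ∈ Z, j ≠ 0). Then A is not a nontrivial tensor product: there do not exist nontrivial subgroups H, K with G = H × K, both H and K being A-subgroups, and A = A_H ⊗ A_K. -/
open scoped Pointwise

private lemma gag (i j : ℤ) : ga ^ i * gb ^ j = Multiplicative.ofAdd (i, j) := by
  simp [ga, gb, ← ofAdd_zsmul, ← ofAdd_add, Prod.ext_iff]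

private lemma gag_inj {i j i' j' : ℤ} (h : ga ^ i * gb ^ j = ga ^ i' * gb ^ j') :
    i = i' ∧ j = j' := by
  rw [gag, gag] at h
  have := Multiplicative.ofAdd.injective h
  exact Prod.mk.injEq .. ▸ this

/-- The Schur ring of type (viii) is not a nontrivial tensor product. -/
theorem not_tensor_product {F : Type*} [Field F] [CharZero F] (n : ℤ) (hn : n ≠ 0)
    (A : SchurRing F Z2)
    (hparts : A.parts =
      {D : Finset Z2 |
        (∃ i : ℤ, D = {ga ^ i, ga ^ (-i)}) ∨
        (∃ i j : ℤ, j ≠ 0 ∧ D = {ga ^ (n * j + i) * gb ^ (-j), ga ^ i * gb ^ j})}) :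
    ¬ ∃ H K : Subgroup Z2, H ≠ ⊥ ∧ K ≠ ⊥ ∧ H ⊓ K = ⊥ ∧ H ⊔ K = ⊤ ∧
        A.IsASet ↑H ∧ A.IsASet ↑K ∧
        A.parts = {D : Finset Z2 | ∃ C₁ ∈ A.parts, ∃ C₂ ∈ A.parts,
          (↑C₁ : Set Z2) ⊆ ↑H ∧ (↑C₂ : Set Z2) ⊆ ↑K ∧ D = C₁ * C₂} := by
  rintro ⟨H, K, hH, hK, hHK, -, hAH, hAK, htens⟩
  -- every part has card ≤ 2
  have hcard : ∀ D ∈ A.parts, D.card ≤ 2 := by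
    intro D hD
    rw [hparts] at hD
    rcases hD with ⟨i, rfl⟩ | ⟨i, j, hj, rfl⟩ <;>
      exact le_trans (Finset.card_insert_le _ _) (by simp)
  -- any part containing a nontrivial element is a pair
  have hpair : ∀ D ∈ A.parts, ∀ h ∈ D, h ≠ 1 → ∃ x y : Z2, x ≠ y ∧ D = {x, y} := by
    intro D hD h hhD hh1
    rw [hparts] at hD
    rcases hD with ⟨i, rfl⟩ | ⟨i, j, hj, rfl⟩
    · refine ⟨ga ^ i, ga ^ (-i), ?_, rfl⟩
      intro he
      have he' : ga ^ i * gb ^ (0:ℤ) = ga ^ (-i) * gb ^ (0:ℤ) := by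
        rw [he]
      have hi : i = 0 := by have := (gag_inj he').1; omega
      simp only [hi, neg_zero, zpow_zero, Finset.mem_insert, Finset.mem_singleton,
        Finset.insert_idem] at hhD
      rcases hhD with h | h <;> exact hh1 h
    · refine ⟨_, _, ?_, rfl⟩
      intro he
      have := (gag_inj he).2
      omega
  -- pick nontrivial elements of H and K
  obtain ⟨⟨h, hhH⟩, hh1⟩ := Subgroup.ne_bot_iff_exists_ne_one.mp hH
  obtain ⟨⟨k, hkK⟩, hk1⟩ := Subgroup.ne_bot_iff_exists_ne_one.mp hK
  simp only [ne_eq, Subgroup.mk_eq_one] at hh1 hk1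
  obtain ⟨DH, hDH, hhDH⟩ := A.cover h
  obtain ⟨DK, hDK, hkDK⟩ := A.cover k
  have hDHsub : (↑DH : Set Z2) ⊆ ↑H := hAH DH hDH ⟨h, hhDH, hhH⟩
  have hDKsub : (↑DK : Set Z2) ⊆ ↑K := hAK DK hDK ⟨k, hkDK, hkK⟩
  obtain ⟨x₁, x₂, hx, rfl⟩ := hpair DH hDH h hhDH hh1
  obtain ⟨y₁, y₂, hy, rfl⟩ := hpair DK hDK k hkDK hk1
  -- the product is a part
  have hprod : ({x₁, x₂} * {y₁, y₂} : Finset Z2) ∈ A.parts := by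
    rw [htens]
    exact ⟨_, hDH, _, hDK, hDHsub, hDKsub, rfl⟩
  -- membership facts
  have hx₁ : x₁ ∈ H := hDHsub (by simp)
  have hx₂ : x₂ ∈ H := hDHsub (by simp)
  have hy₁ : y₁ ∈ K := hDKsub (by simp)
  have hy₂ : y₂ ∈ K := hDKsub (by simp)
  -- the triple is inside the product
  have hsub : ({x₁ * y₁, x₁ * y₂, x₂ * y₁} : Finset Z2) ⊆ {x₁, x₂} * {y₁, y₂} := by
    intro z hz
    simp only [Finset.mem_insert, Finset.mem_singleton] at hz
    rcases hz with rfl | rfl | rfl <;>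
      exact Finset.mul_mem_mul (by simp) (by simp)
  have hd12 : x₁ * y₂ ≠ x₂ * y₁ := by
    intro he
    have hg : x₂⁻¹ * x₁ = y₁ * y₂⁻¹ := by
      rw [mul_comm x₂⁻¹ x₁, ← div_eq_mul_inv, ← div_eq_mul_inv, div_eq_div_iff_mul_eq_mul]
      exact he.trans (mul_comm _ _)
    have hmemH : x₂⁻¹ * x₁ ∈ H := H.mul_mem (H.inv_mem hx₂) hx₁
    have hmemK : x₂⁻¹ * x₁ ∈ K := hg ▸ K.mul_mem hy₁ (K.inv_mem hy₂)
    have : x₂⁻¹ * x₁ ∈ H ⊓ K := ⟨hmemH, hmemK⟩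
    rw [hHK, Subgroup.mem_bot] at this
    exact hx (inv_mul_eq_one.mp this).symm
  have hcard3 : ({x₁ * y₁, x₁ * y₂, x₂ * y₁} : Finset Z2).card = 3 := by
    rw [Finset.card_insert_of_notMem, Finset.card_insert_of_notMem, Finset.card_singleton]
    · simp only [Finset.mem_singleton]
      exact hd12
    · simp only [Finset.mem_insert, Finset.mem_singleton, not_or]
      exact ⟨fun he => hy (mul_left_cancel he), fun he => hx (mul_right_cancel he)⟩
  have := hcard _ hprod
  have := Finset.card_le_card hsub
  omega
end
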